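/- Let X, Y be Banach spaces, T: X → Y a closed operator, and (A_n)_{n≥0} a sequence of operators with D(T) ⊆ D(A_n) that are T-bounded: ‖A_n v‖ ≤ a_n‖v‖ + b_n‖Tv‖ for all v ∈ D(T). If a_n → 0 and b_n → 0, then T_n = T + A_n is closed for sufficiently large n and T_n converges to T in the generalized sense, i.e. the gap distance δ̃(T_n, T) between their graphs tends to 0. -/

import Mathlib

open Filter

/-- `δ(M, N) = sup { dist(u, N) : u ∈ M, ‖u‖ = 1 }`, for subsets of a Banach
space. -/
noncomputable def gapδ {Z : Type*} [NormedAddCommGroup Z] (M N : Set Z) : ℝ :=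
  ⨆ u : {u : Z // u ∈ M ∧ ‖u‖ = 1}, Metric.infDist u.1 N

/-- The gap `δ̃(M, N) = max (δ(M,N), δ(N,M))` between closed linear manifolds. -/
noncomputable def gapDist {Z : Type*} [NormedAddCommGroup Z] (M N : Set Z) : ℝ :=
  max (gapδ M N) (gapδ N M)

/-!
Parametrize both graphs by `D(T)`: `g v = (v, T v)` and `f v = (v, T v + A v)`.
Relative boundedness gives `‖f v - g v‖ = ‖A v‖ ≤ (a + b) ‖g v‖`, and, once `b < 1`,
`‖g v‖ ≤ (1 + a) / (1 - b) · ‖f v‖`. Two parametrizations of sets that are this close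
pointwise have gap at most `(a + b)(1 + a) / (1 - b)`, which tends to `0`; and the second
estimate makes `g` Cauchy along any sequence along which `f` converges, so closedness of
the graph of `T` passes to that of `T + A`.
-/

open Set Topology

section Gap

variable {Z : Type*} [NormedAddCommGroup Z]

lemma gapδ_nonneg (M N : Set Z) : 0 ≤ gapδ M N :=
  Real.iSup_nonneg fun _ => Metric.infDist_nonneg

lemma gapDist_nonneg (M N : Set Z) : 0 ≤ gapDist M N :=
  (gapδ_nonneg M N).trans (le_max_left _ _)

lemma gapδ_range_le {ι : Type*} (f g : ι → Z) {ε : ℝ} (hε : 0 ≤ ε)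
    (hfg : ∀ i, ‖f i - g i‖ ≤ ε * ‖f i‖) : gapδ (range f) (range g) ≤ ε := by
  refine Real.iSup_le ?_ hε
  rintro ⟨_, ⟨i, rfl⟩, hi⟩
  calc Metric.infDist (f i) (range g) ≤ dist (f i) (g i) :=
        Metric.infDist_le_dist_of_mem (mem_range_self i)
    _ = ‖f i - g i‖ := dist_eq_norm _ _
    _ ≤ ε := by simpa [hi] using hfg i

lemma gapDist_range_le {ι : Type*} (f g : ι → Z) {ε c : ℝ} (hε : 0 ≤ ε) (hc : 1 ≤ c)
    (hfg : ∀ i, ‖f i - g i‖ ≤ ε * ‖g i‖) (hgf : ∀ i, ‖g i‖ ≤ c * ‖f i‖) :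
    gapDist (range f) (range g) ≤ ε * c := by
  refine max_le (gapδ_range_le f g (by positivity) fun i => ?_) ?_
  · calc ‖f i - g i‖ ≤ ε * ‖g i‖ := hfg i
      _ ≤ ε * (c * ‖f i‖) := by gcongr; exact hgf i
      _ = ε * c * ‖f i‖ := by ring
  · refine (gapδ_range_le g f hε fun i => ?_).trans (le_mul_of_one_le_right hε hc)
    rw [norm_sub_rev]
    exact hfg i

lemma isClosed_range_of_norm_sub_le [CompleteSpace Z] {ι : Type*} [AddGroup ι] (f g : ι →+ Z)
    {ε c : ℝ} (hg : IsClosed (range g)) (hfg : ∀ i, ‖f i - g i‖ ≤ ε * ‖g i‖)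
    (hgf : ∀ i, ‖g i‖ ≤ c * ‖f i‖) : IsClosed (range f) := by
  have hf_dist : ∀ i j, dist (f i) (f j) ≤ (1 + ε) * dist (g i) (g j) := by
    intro i j
    simp only [dist_eq_norm, ← map_sub]
    calc ‖f (i - j)‖ ≤ ‖g (i - j)‖ + ‖f (i - j) - g (i - j)‖ := norm_le_insert' _ _
      _ ≤ (1 + ε) * ‖g (i - j)‖ := by linarith [hfg (i - j)]
  have hg_dist : ∀ i j, dist (g i) (g j) ≤ c * dist (f i) (f j) := by
    intro i j
    simpa only [dist_eq_norm, ← map_sub] using hgf (i - j)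
  refine isSeqClosed_iff_isClosed.mp fun z l hz hzl => ?_
  choose i hi using hz
  have hcauchy : CauchySeq (fun n => g (i n)) := by
    have hz_cauchy := cauchySeq_iff_tendsto_dist_atTop_0.mp hzl.cauchySeq
    refine cauchySeq_iff_tendsto_dist_atTop_0.mpr
      (squeeze_zero (fun _ => dist_nonneg) (fun n => hg_dist _ _) ?_)
    simpa [hi] using hz_cauchy.const_mul c
  obtain ⟨w, hw⟩ := cauchySeq_tendsto_of_complete hcauchy
  obtain ⟨j, rfl⟩ := hg.mem_of_tendsto hw (Eventually.of_forall fun n => mem_range_self _)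
  have hfj : Tendsto z atTop (𝓝 (f j)) := by
    refine tendsto_iff_dist_tendsto_zero.mpr
      (squeeze_zero (fun _ => dist_nonneg) (fun n => (hi n).symm ▸ hf_dist (i n) j) ?_)
    simpa using (tendsto_iff_dist_tendsto_zero.mp hw).const_mul (1 + ε)
  exact tendsto_nhds_unique hzl hfj ▸ mem_range_self j

end Gap

lemma one_le_one_add_div_one_sub {a b : ℝ} (ha : 0 ≤ a) (hb : 0 ≤ b) (hb1 : b < 1) :
    1 ≤ (1 + a) / (1 - b) :=
  (one_le_div (sub_pos.mpr hb1)).mpr (by linarith)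

namespace LinearPMap

section Algebra

variable {R E F : Type*} [Ring R] [AddCommGroup E] [Module R E] [AddCommGroup F] [Module R F]

def graphMap (T : E →ₗ.[R] F) : T.domain →ₗ[R] E × F :=
  T.domain.subtype.prod T.toFun

@[simp]
lemma graphMap_apply (T : E →ₗ.[R] F) (v : T.domain) : T.graphMap v = ((v : E), T v) := rfl

lemma range_graphMap (T : E →ₗ.[R] F) : range T.graphMap = T.graph := by
  ext x
  simp [mem_graph_iff, Prod.ext_iff]

def addGraphMap (T B : E →ₗ.[R] F) (hdom : T.domain ≤ B.domain) : T.domain →ₗ[R] E × F :=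
  (T + B).graphMap ∘ₗ Submodule.inclusion (le_inf le_rfl hdom)

lemma addGraphMap_apply (T B : E →ₗ.[R] F) (hdom : T.domain ≤ B.domain) (v : T.domain) :
    addGraphMap T B hdom v = ((v : E), T v + B ⟨v, hdom v.2⟩) := rfl

lemma range_addGraphMap (T B : E →ₗ.[R] F) (hdom : T.domain ≤ B.domain) :
    range (addGraphMap T B hdom) = (T + B).graph := by
  have hsurj : Function.Surjective (Submodule.inclusion (le_inf le_rfl hdom)) :=
    fun w => ⟨⟨w, w.2.1⟩, rfl⟩
  rw [addGraphMap, LinearMap.coe_comp, hsurj.range_comp, range_graphMap]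

end Algebra

section RelativelyBounded

variable {X Y : Type*} [NormedAddCommGroup X] [NormedSpace ℝ X]
  [NormedAddCommGroup Y] [NormedSpace ℝ Y]
  {T B : X →ₗ.[ℝ] Y} {hdom : T.domain ≤ B.domain} {a b : ℝ}

lemma norm_addGraphMap_sub_le (ha : 0 ≤ a) (hb : 0 ≤ b)
    (hbound : ∀ v : T.domain, ‖B ⟨v, hdom v.2⟩‖ ≤ a * ‖(v : X)‖ + b * ‖T v‖) (v : T.domain) :
    ‖addGraphMap T B hdom v - T.graphMap v‖ ≤ (a + b) * ‖T.graphMap v‖ := by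
  have hsub : addGraphMap T B hdom v - T.graphMap v = (0, B ⟨v, hdom v.2⟩) := by
    simp [addGraphMap_apply]
  have hv : ‖(v : X)‖ ≤ ‖T.graphMap v‖ := norm_fst_le (T.graphMap v)
  have hTv : ‖T v‖ ≤ ‖T.graphMap v‖ := norm_snd_le (T.graphMap v)
  rw [hsub, Prod.norm_mk, norm_zero, max_eq_right (norm_nonneg _)]
  calc ‖B ⟨v, hdom v.2⟩‖ ≤ a * ‖(v : X)‖ + b * ‖T v‖ := hbound v
    _ ≤ a * ‖T.graphMap v‖ + b * ‖T.graphMap v‖ := by gcongr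
    _ = (a + b) * ‖T.graphMap v‖ := by ring

lemma norm_graphMap_le (ha : 0 ≤ a) (hb : 0 ≤ b) (hb1 : b < 1)
    (hbound : ∀ v : T.domain, ‖B ⟨v, hdom v.2⟩‖ ≤ a * ‖(v : X)‖ + b * ‖T v‖) (v : T.domain) :
    ‖T.graphMap v‖ ≤ (1 + a) / (1 - b) * ‖addGraphMap T B hdom v‖ := by
  set w := addGraphMap T B hdom v
  have hv : ‖(v : X)‖ ≤ ‖w‖ := norm_fst_le w
  have hTBv : ‖T v + B ⟨v, hdom v.2⟩‖ ≤ ‖w‖ := norm_snd_le w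
  have hTv : (1 - b) * ‖T v‖ ≤ (1 + a) * ‖w‖ := by
    have := norm_le_insert' (T v) (T v + B ⟨v, hdom v.2⟩)
    rw [sub_add_cancel_left, norm_neg] at this
    nlinarith [hbound v, norm_nonneg w]
  rw [graphMap_apply, Prod.norm_mk]
  refine max_le ?_ ?_
  · exact hv.trans (le_mul_of_one_le_left (norm_nonneg w) (one_le_one_add_div_one_sub ha hb hb1))
  · rw [div_mul_eq_mul_div, le_div_iff₀ (sub_pos.mpr hb1)]
    linarith

theorem isClosed_graph_add [CompleteSpace X] [CompleteSpace Y]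
    (hT : _root_.IsClosed (T.graph : Set (X × Y))) (ha : 0 ≤ a) (hb : 0 ≤ b) (hb1 : b < 1)
    (hbound : ∀ v : T.domain, ‖B ⟨v, hdom v.2⟩‖ ≤ a * ‖(v : X)‖ + b * ‖T v‖) :
    _root_.IsClosed ((T + B).graph : Set (X × Y)) := by
  rw [← range_addGraphMap T B hdom]
  refine isClosed_range_of_norm_sub_le (addGraphMap T B hdom).toAddMonoidHom
    T.graphMap.toAddMonoidHom ?_ (norm_addGraphMap_sub_le ha hb hbound)
    (norm_graphMap_le ha hb hb1 hbound)
  rwa [LinearMap.toAddMonoidHom_coe, range_graphMap]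

theorem gapDist_graph_add_le (ha : 0 ≤ a) (hb : 0 ≤ b) (hb1 : b < 1)
    (hbound : ∀ v : T.domain, ‖B ⟨v, hdom v.2⟩‖ ≤ a * ‖(v : X)‖ + b * ‖T v‖) :
    gapDist ((T + B).graph : Set (X × Y)) T.graph ≤ (a + b) * ((1 + a) / (1 - b)) := by
  rw [← range_addGraphMap T B hdom, ← range_graphMap]
  exact gapDist_range_le _ _ (add_nonneg ha hb) (one_le_one_add_div_one_sub ha hb hb1)
    (norm_addGraphMap_sub_le ha hb hbound) (norm_graphMap_le ha hb hb1 hbound)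

end RelativelyBounded

end LinearPMap

/-- Kato: let `T : X → Y` be a closed (unbounded, partially
defined) operator, and `Aₙ` a sequence of operators with `D(T) ⊆ D(Aₙ)` that
are `T`-bounded, `‖Aₙ v‖ ≤ aₙ‖v‖ + bₙ‖Tv‖`, with `aₙ → 0` and `bₙ → 0`.
Then `Tₙ = T + Aₙ` is closed for sufficiently large `n`, and `Tₙ → T` in the
generalized sense: the gap between the graphs tends to `0`. -/
theorem stmt_4 {X Y : Type*}
    [NormedAddCommGroup X] [NormedSpace ℝ X] [CompleteSpace X]
    [NormedAddCommGroup Y] [NormedSpace ℝ Y] [CompleteSpace Y]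
    (T : X →ₗ.[ℝ] Y) (hTclosed : IsClosed (T.graph : Set (X × Y)))
    (A : ℕ → (X →ₗ.[ℝ] Y))
    (hdom : ∀ n, T.domain ≤ (A n).domain)
    (a b : ℕ → ℝ) (ha0 : ∀ n, 0 ≤ a n) (hb0 : ∀ n, 0 ≤ b n)
    (hbound : ∀ n, ∀ v : T.domain,
      ‖(A n) ⟨(v : X), hdom n v.2⟩‖ ≤ a n * ‖(v : X)‖ + b n * ‖T v‖)
    (ha : Tendsto a atTop (nhds 0)) (hb : Tendsto b atTop (nhds 0)) :
    (∃ N : ℕ, ∀ n ≥ N, IsClosed ((T + A n).graph : Set (X × Y))) ∧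
      Tendsto (fun n => gapDist ((T + A n).graph : Set (X × Y))
        (T.graph : Set (X × Y))) atTop (nhds 0) := by
  have hb1 : ∀ᶠ n in atTop, b n < 1 := hb.eventually (eventually_lt_nhds one_pos)
  have hbound_lim : Tendsto (fun n => (a n + b n) * ((1 + a n) / (1 - b n))) atTop (𝓝 0) := by
    simpa using (ha.add hb).mul ((ha.const_add 1).div (hb.const_sub 1) (by norm_num))
  refine ⟨?_, squeeze_zero' (Eventually.of_forall fun n => gapDist_nonneg _ _) ?_ hbound_lim⟩
  · obtain ⟨N, hN⟩ := eventually_atTop.mp hb1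
    exact ⟨N, fun n hn => LinearPMap.isClosed_graph_add hTclosed (ha0 n) (hb0 n) (hN n hn)
      (hbound n)⟩
  · filter_upwards [hb1] with n hn
    exact LinearPMap.gapDist_graph_add_le (ha0 n) (hb0 n) hn (hbound n)
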